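/- arXiv:1712.01241 — 10 statements merged into one kernel-verified Lean document; each statement's English description precedes it below -/
import Mathlib

section
/- The number of mistakes made by the perceptron algorithm on any sequence of labeled points consistent with a linear threshold function through the origin is at most (1/γ)², where γ is the minimum over all points y_i of |⟨y_i, w*⟩|/(‖y_i‖‖w*‖) for the true separator w*. -/
/-!
Novikoff's argument. Each mistake adds to `w` a unit vector `u` with `⟪w, u⟫ ≤ 0` and
`⟪u, w*⟫ ≥ γ ‖w*‖`. After `M` mistakes, therefore, `⟪w, w*⟫ ≥ M γ ‖w*‖` while `‖w‖² ≤ M`, and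
Cauchy–Schwarz gives `M γ ≤ ‖w‖ ≤ √M`, i.e. `M ≤ (1/γ)²`.
-/

open RealInnerProductSpace Finset

section Updates

variable {E : Type*} [NormedAddCommGroup E] [InnerProductSpace ℝ E]
  {p : ℕ → Prop} [DecidablePred p] {w u : ℕ → E}

theorem mul_count_le_inner_of_updates (hw0 : w 0 = 0)
    (hwrec : ∀ t, w (t + 1) = if p t then w t + u t else w t)
    {v : E} {m : ℝ} (hm : ∀ t, p t → m ≤ ⟪u t, v⟫) (T : ℕ) :
    m * Nat.count p T ≤ ⟪w T, v⟫ := by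
  induction T with
  | zero => simp [hw0]
  | succ t ih =>
    rw [hwrec, Nat.count_succ]
    split_ifs with ht
    · rw [inner_add_left]
      push_cast
      linarith [hm t ht]
    · simpa using ih

theorem norm_sq_le_count_of_updates (hw0 : w 0 = 0)
    (hwrec : ∀ t, w (t + 1) = if p t then w t + u t else w t)
    (hu : ∀ t, p t → ‖u t‖ ≤ 1) (hwu : ∀ t, p t → ⟪w t, u t⟫ ≤ 0) (T : ℕ) :
    ‖w T‖ ^ 2 ≤ Nat.count p T := by
  induction T with
  | zero => simp [hw0]
  | succ t ih =>
    rw [hwrec, Nat.count_succ]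
    split_ifs with ht
    · have hu1 : ‖u t‖ ^ 2 ≤ 1 := pow_le_one₀ (norm_nonneg _) (hu t ht)
      rw [norm_add_sq_real]
      push_cast
      linarith [hwu t ht]
    · simpa using ih

theorem count_le_of_updates (hw0 : w 0 = 0)
    (hwrec : ∀ t, w (t + 1) = if p t then w t + u t else w t)
    (hu : ∀ t, p t → ‖u t‖ ≤ 1) (hwu : ∀ t, p t → ⟪w t, u t⟫ ≤ 0)
    {v : E} {m : ℝ} (hm0 : 0 < m) (hm : ∀ t, p t → m ≤ ⟪u t, v⟫) (T : ℕ) :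
    (Nat.count p T : ℝ) ≤ (‖v‖ / m) ^ 2 := by
  set M : ℝ := (Nat.count p T : ℝ)
  have hM : 0 ≤ M := Nat.cast_nonneg _
  have hinner := mul_count_le_inner_of_updates hw0 hwrec hm T
  have hnorm := norm_sq_le_count_of_updates hw0 hwrec hu hwu T
  have hmM : m * M ≤ ‖w T‖ * ‖v‖ := hinner.trans (real_inner_le_norm _ _)
  have hsq : m ^ 2 * M ^ 2 ≤ M * ‖v‖ ^ 2 :=
    calc m ^ 2 * M ^ 2 = (m * M) ^ 2 := by ring
      _ ≤ (‖w T‖ * ‖v‖) ^ 2 := pow_le_pow_left₀ (by positivity) hmM 2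
      _ = ‖w T‖ ^ 2 * ‖v‖ ^ 2 := by ring
      _ ≤ M * ‖v‖ ^ 2 := by gcongr
  rw [div_pow, le_div_iff₀ (by positivity)]
  rcases hM.eq_or_lt with h | h
  · rw [← h, zero_mul]; positivity
  · nlinarith

end Updates

section DivNormSmul

variable {E : Type*} [NormedAddCommGroup E] [InnerProductSpace ℝ E] {y : E} {c : ℝ}

theorem norm_div_norm_smul_self (hy : y ≠ 0) (c : ℝ) : ‖(c / ‖y‖) • y‖ = |c| := by
  rw [norm_smul, Real.norm_eq_abs, abs_div, abs_norm, div_mul_cancel₀ _ (norm_ne_zero_iff.mpr hy)]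

theorem real_inner_div_norm_smul_nonpos {w : E} (h : c * ⟪y, w⟫ ≤ 0) :
    ⟪w, (c / ‖y‖) • y⟫ ≤ 0 := by
  rw [real_inner_smul_right, real_inner_comm, div_mul_eq_mul_div₀]
  exact div_nonpos_of_nonpos_of_nonneg h (norm_nonneg y)

theorem real_inner_div_norm_smul_eq_abs {v : E} (hc : |c| = 1) (hpos : 0 < c * ⟪y, v⟫) :
    ⟪(c / ‖y‖) • y, v⟫ = |⟪y, v⟫| / ‖y‖ := by
  have : c * ⟪y, v⟫ = |⟪y, v⟫| := by rw [← one_mul |_|, ← hc, ← abs_mul, abs_of_pos hpos]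
  rw [real_inner_smul_left, div_mul_eq_mul_div₀, this]

end DivNormSmul

open Classical in
theorem perceptron_mistake_bound_general {d n : ℕ}
    (y : Fin n → EuclideanSpace ℝ (Fin d)) (ℓ : Fin n → ℝ)
    (wstar : EuclideanSpace ℝ (Fin d)) (γ : ℝ)
    (hℓ : ∀ i, ℓ i = 1 ∨ ℓ i = -1)
    (hsep : ∀ i, 0 < ℓ i * ⟪y i, wstar⟫)
    (hγ : IsLeast {t : ℝ | ∃ i : Fin n, t = |⟪y i, wstar⟫| / (‖y i‖ * ‖wstar‖)} γ)
    (z : ℕ → Fin n) (w : ℕ → EuclideanSpace ℝ (Fin d))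
    (hw0 : w 0 = 0)
    (hwrec : ∀ t : ℕ, w (t + 1) =
      if ℓ (z t) * ⟪y (z t), w t⟫ ≤ 0
      then w t + (ℓ (z t) / ‖y (z t)‖) • y (z t) else w t)
    (T : ℕ) :
    (((Finset.range T).filter
        (fun t => ℓ (z t) * ⟪y (z t), w t⟫ ≤ 0)).card : ℝ) ≤ (1 / γ) ^ 2 := by
  obtain ⟨i₀, hγi₀⟩ := hγ.1
  have hy : ∀ i, y i ≠ 0 := fun i h => by simpa [h] using hsep i
  have hwstar : 0 < ‖wstar‖ := norm_pos_iff.mpr fun h => by simpa [h] using hsep i₀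
  have hℓ1 : ∀ i, |ℓ i| = 1 := fun i => by rcases hℓ i with h | h <;> simp [h]
  have hγ0 : 0 < γ := hγi₀ ▸ div_pos (abs_pos.mpr (right_ne_zero_of_mul (hsep i₀).ne'))
    (mul_pos (norm_pos_iff.mpr (hy i₀)) hwstar)
  have hmargin : ∀ i, γ * ‖wstar‖ ≤ |⟪y i, wstar⟫| / ‖y i‖ := fun i => by
    have := hγ.2 ⟨i, rfl⟩
    rwa [← div_div, le_div_iff₀ hwstar] at this
  have hbound := count_le_of_updates hw0 hwrec
    (fun t _ => (norm_div_norm_smul_self (hy _) _).trans_le (hℓ1 _).le)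
    (fun _ ht => real_inner_div_norm_smul_nonpos ht) (mul_pos hγ0 hwstar)
    (fun t _ => (real_inner_div_norm_smul_eq_abs (hℓ1 _) (hsep _)).symm ▸ hmargin _) T
  rwa [Nat.count_eq_card_filter_range, div_mul_cancel_right₀ hwstar.ne', ← one_div] at hbound

open Classical in
/-- Perceptron mistake bound: on any sequence of labeled points consistent with a
linear threshold function through the origin, the number of mistakes is at most `(1/γ)²`. -/
theorem perceptron_mistake_bound {d n : ℕ} (hn : 0 < n)
    (y : Fin n → EuclideanSpace ℝ (Fin d)) (ℓ : Fin n → ℝ)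
    (wstar : EuclideanSpace ℝ (Fin d)) (γ : ℝ)
    (hy : ∀ i, y i ≠ 0) (hwstar : wstar ≠ 0)
    (hℓ : ∀ i, ℓ i = 1 ∨ ℓ i = -1)
    (hsep : ∀ i, 0 < ℓ i * ⟪y i, wstar⟫)
    (hγ : IsLeast {t : ℝ | ∃ i : Fin n, t = |⟪y i, wstar⟫| / (‖y i‖ * ‖wstar‖)} γ)
    (z : ℕ → Fin n) (w : ℕ → EuclideanSpace ℝ (Fin d))
    (hw0 : w 0 = 0)
    (hwrec : ∀ t : ℕ, w (t + 1) =
      if ℓ (z t) * ⟪y (z t), w t⟫ ≤ 0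
      then w t + (ℓ (z t) / ‖y (z t)‖) • y (z t) else w t)
    (T : ℕ) :
    (((Finset.range T).filter
        (fun t => ℓ (z t) * ⟪y (z t), w t⟫ ≤ 0)).card : ℝ) ≤ (1 / γ) ^ 2 :=
  perceptron_mistake_bound_general y ℓ wstar γ hℓ hsep hγ z w hw0 hwrec T
end

section
/- If a set of labeled points is linearly separable through the origin with angular margin γ, then there exists a multiset M of the points of size at most (1/γ)² such that the vector w = Σ_{y∈M} ℓ(y)·y/‖y‖ correctly classifies every point, i.e., sgn(⟨w, y_i⟩) = ℓ(y_i) for all i. -/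
/-!
This is Novikoff's mistake bound for the perceptron. Normalize the points to
`zⱼ = ℓ(yⱼ) yⱼ / ‖yⱼ‖`, so that `‖zⱼ‖ = 1` and `⟪zⱼ, w*⟫ ≥ γ`. Run the perceptron from `w = 0`,
adding `zᵢ` whenever `⟪w, zᵢ⟫ ≤ 0`. After `m` updates `⟪w, w*⟫ ≥ γ m`, while `‖w‖² ≤ m` because
each update adds `1 + 2⟪w, zᵢ⟫ ≤ 1` to `‖w‖²`. Hence `γ² m² ≤ ‖w‖² ≤ m`, i.e. `m ≤ 1/γ²`, so the
perceptron must stop, and it stops only at a `w` that classifies every point correctly.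
-/

open RealInnerProductSpace Finset

namespace Perceptron

variable {E ι : Type*} [NormedAddCommGroup E] [InnerProductSpace ℝ E] [Fintype ι]

def weight (z : ι → E) (f : ι → ℕ) : E := ∑ j, (f j : ℝ) • z j

def Invariant (z : ι → E) (u : E) (γ : ℝ) (f : ι → ℕ) : Prop :=
  ‖weight z f‖ ^ 2 ≤ ∑ j, (f j : ℝ) ∧ γ * ∑ j, (f j : ℝ) ≤ ⟪weight z f, u⟫

variable {z : ι → E} {u : E} {γ : ℝ}

theorem invariant_zero : Invariant z u γ 0 := by
  simp [Invariant, weight]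

theorem weight_add_single [DecidableEq ι] (f : ι → ℕ) (i : ι) :
    weight z (f + Pi.single i 1) = weight z f + z i := by
  simp [weight, add_smul, sum_add_distrib, Pi.single_apply, ite_smul]

theorem sum_cast_add_single [DecidableEq ι] (f : ι → ℕ) (i : ι) :
    ∑ j, ((f + Pi.single i 1 : ι → ℕ) j : ℝ) = ∑ j, (f j : ℝ) + 1 := by
  simp [sum_add_distrib, Pi.single_apply]

theorem Invariant.add_single [DecidableEq ι] {f : ι → ℕ} (hf : Invariant z u γ f) {i : ι}
    (hz : ‖z i‖ ≤ 1) (hγ : γ ≤ ⟪z i, u⟫) (hmistake : ⟪weight z f, z i⟫ ≤ 0) :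
    Invariant z u γ (f + Pi.single i 1) := by
  rw [Invariant, weight_add_single, sum_cast_add_single, norm_add_sq_real, inner_add_left]
  have hz2 : ‖z i‖ ^ 2 ≤ 1 := pow_le_one₀ (norm_nonneg _) hz
  constructor <;> nlinarith [hf.1, hf.2]

theorem Invariant.sum_le {f : ι → ℕ} (hf : Invariant z u γ f) (hu : ‖u‖ ≤ 1) (hγ : 0 < γ) :
    ∑ j, (f j : ℝ) ≤ (1 / γ) ^ 2 := by
  set m := ∑ j, (f j : ℝ)
  have hm : 0 ≤ m := by positivity
  have hproj : γ * m ≤ ‖weight z f‖ :=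
    hf.2.trans <| (real_inner_le_norm _ _).trans <|
      mul_le_of_le_one_right (norm_nonneg _) hu
  have hsq : (γ * m) ^ 2 ≤ m := (pow_le_pow_left₀ (by positivity) hproj 2).trans hf.1
  rw [div_pow, one_pow, le_div_iff₀ (by positivity)]
  rcases hm.eq_or_lt with h | h
  · simp [← h]
  · nlinarith

theorem exists_sum_le_forall_inner_pos (hz : ∀ j, ‖z j‖ ≤ 1) (hu : ‖u‖ ≤ 1) (hγ : 0 < γ)
    (hmargin : ∀ j, γ ≤ ⟪z j, u⟫) :
    ∃ f : ι → ℕ, ∑ j, (f j : ℝ) ≤ (1 / γ) ^ 2 ∧ ∀ i, 0 < ⟪weight z f, z i⟫ := by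
  classical
  by_contra! hmistake
  have hgrow : ∀ k : ℕ, ∃ f, Invariant z u γ f ∧ ∑ j, (f j : ℝ) = k := by
    intro k
    induction k with
    | zero => exact ⟨0, invariant_zero, by simp⟩
    | succ k ih =>
      obtain ⟨f, hf, hk⟩ := ih
      obtain ⟨i, hi⟩ := hmistake f (hf.sum_le hu hγ)
      refine ⟨f + Pi.single i 1, hf.add_single (hz i) (hmargin i) hi, ?_⟩
      rw [sum_cast_add_single, hk, Nat.cast_succ]
  obtain ⟨f, hf, hk⟩ := hgrow (⌊(1 / γ) ^ 2⌋₊ + 1)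
  have hbound := hf.sum_le hu hγ
  rw [hk] at hbound
  push_cast at hbound
  linarith [Nat.lt_floor_add_one ((1 / γ) ^ 2)]

end Perceptron

theorem perceptron_direction_exists_general {d n : ℕ}
    (y : Fin n → EuclideanSpace ℝ (Fin d)) (ℓ : Fin n → ℝ)
    (wstar : EuclideanSpace ℝ (Fin d)) (γ : ℝ)
    (hy : ∀ i, y i ≠ 0) (hwstar : ‖wstar‖ = 1)
    (hℓ : ∀ i, ℓ i = 1 ∨ ℓ i = -1)
    (hsep : ∀ i, 0 < ℓ i * ⟪y i, wstar⟫)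
    (hγ : IsLeast {t : ℝ | ∃ i : Fin n, t = |⟪y i, wstar⟫| / ‖y i‖} γ)
    (hγpos : 0 < γ) :
    ∃ f : Fin n → ℕ, ((∑ i, f i : ℕ) : ℝ) ≤ (1 / γ) ^ 2 ∧
      ∀ i : Fin n, 0 < ℓ i * ⟪∑ j, (f j : ℝ) • ((ℓ j / ‖y j‖) • y j), y i⟫ := by
  set z : Fin n → EuclideanSpace ℝ (Fin d) := fun j => (ℓ j / ‖y j‖) • y j
  have hnorm : ∀ j, 0 < ‖y j‖ := fun j => norm_pos_iff.mpr (hy j)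
  have habs : ∀ j, |ℓ j| = 1 := fun j => by rcases hℓ j with h | h <;> simp [h]
  have hz : ∀ j, ‖z j‖ ≤ 1 := fun j => by
    simp [z, norm_smul, habs j, (hnorm j).ne']
  have hmargin : ∀ j, γ ≤ ⟪z j, wstar⟫ := fun j => by
    have hlabel : ℓ j * ⟪y j, wstar⟫ = |⟪y j, wstar⟫| := by
      rw [← abs_of_pos (hsep j), abs_mul, habs j, one_mul]
    calc γ ≤ |⟪y j, wstar⟫| / ‖y j‖ := hγ.2 ⟨j, rfl⟩
      _ = ⟪z j, wstar⟫ := by rw [real_inner_smul_left, ← hlabel]; ring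
  obtain ⟨f, hsize, hpos⟩ :=
    Perceptron.exists_sum_le_forall_inner_pos hz hwstar.le hγpos hmargin
  refine ⟨f, by exact_mod_cast hsize, fun i => ?_⟩
  have hrescale : ℓ i * ⟪Perceptron.weight z f, y i⟫ =
      ‖y i‖ * ⟪Perceptron.weight z f, z i⟫ := by
    rw [real_inner_smul_right]; field_simp [(hnorm i).ne']
  exact hrescale ▸ mul_pos (hnorm i) (hpos i)

/-- If labeled points are linearly separable through the origin with angular margin `γ`,
there is a multiset `M` of the points of size at most `(1/γ)²` such that
`w = Σ_{y∈M} ℓ(y)·y/‖y‖` correctly classifies every point. -/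
theorem perceptron_direction_exists {d n : ℕ} (hn : 0 < n)
    (y : Fin n → EuclideanSpace ℝ (Fin d)) (ℓ : Fin n → ℝ)
    (wstar : EuclideanSpace ℝ (Fin d)) (γ : ℝ)
    (hy : ∀ i, y i ≠ 0) (hwstar : ‖wstar‖ = 1)
    (hℓ : ∀ i, ℓ i = 1 ∨ ℓ i = -1)
    (hsep : ∀ i, 0 < ℓ i * ⟪y i, wstar⟫)
    (hγ : IsLeast {t : ℝ | ∃ i : Fin n, t = |⟪y i, wstar⟫| / ‖y i‖} γ)
    (hγpos : 0 < γ) :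
    ∃ f : Fin n → ℕ, ((∑ i, f i : ℕ) : ℝ) ≤ (1 / γ) ^ 2 ∧
      ∀ i : Fin n, 0 < ℓ i * ⟪∑ j, (f j : ℝ) • ((ℓ j / ‖y j‖) • y j), y i⟫ :=
  perceptron_direction_exists_general y ℓ wstar γ hy hwstar hℓ hsep hγ hγpos
end

section
/- In an ε-additive perturbation stable 2-means instance in which both clusters have at least 4 points, every point x satisfies |⟨x − p, u⟩| ≥ εD, where p is the midpoint of the two cluster means, u the unit vector in the intermean direction, and D the intermean distance. In particular, points of C₁ satisfy ⟨x−p,u⟩ ≥ εD and points of C₂ satisfy ⟨x−p,u⟩ ≤ −εD. -/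
/-! Push a point `x` of `C₁` by `ε (μ₂ - μ₁)`, a distance `εD`, and spread the opposite
displacement over the remaining (at least one) points of `C₁`; every point moves at most `εD` and
no cluster mean changes. By stability `C₁, C₂` is still optimal, so the pushed point is still no
closer to `μ₂` than to `μ₁`, which reads `⟨x - p, μ₁ - μ₂⟩ - εD² ≥ 0`. -/

open RealInnerProductSpace Finset

open Classical in
/-- The mean of cluster `j` in the clustering `c` of the points `x`. -/
noncomputable def clusterMean {d n k : ℕ} (x : Fin n → EuclideanSpace ℝ (Fin d))
    (c : Fin n → Fin k) (j : Fin k) : EuclideanSpace ℝ (Fin d) :=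
  (((Finset.univ.filter (fun i => c i = j)).card : ℝ))⁻¹ •
    ∑ i ∈ Finset.univ.filter (fun i => c i = j), x i

/-- The `k`-means cost of the clustering `c` of the points `x` (each cluster with its mean). -/
noncomputable def kmeansCost {d n k : ℕ} (x : Fin n → EuclideanSpace ℝ (Fin d))
    (c : Fin n → Fin k) : ℝ :=
  ∑ i, ‖x i - clusterMean x c (c i)‖ ^ 2

/-- `c` is an optimal `k`-means clustering of `x`. -/
def IsOptimalClustering {d n k : ℕ} (x : Fin n → EuclideanSpace ℝ (Fin d))
    (c : Fin n → Fin k) : Prop :=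
  ∀ c' : Fin n → Fin k, kmeansCost x c ≤ kmeansCost x c'

/-- `c` is the unique optimal clustering of `x` (up to relabeling of clusters). -/
def IsUniqueOptimalClustering {d n k : ℕ} (x : Fin n → EuclideanSpace ℝ (Fin d))
    (c : Fin n → Fin k) : Prop :=
  IsOptimalClustering x c ∧
    ∀ c' : Fin n → Fin k, IsOptimalClustering x c' → ∀ i j, (c' i = c' j ↔ c i = c j)

/-- `x` with optimal clustering `c` is `ε`-additive perturbation stable with scale `D`:
after moving every point a distance at most `ε·D`, `c` remains an optimal clustering. -/
def IsAPS {d n k : ℕ} (ε D : ℝ) (x : Fin n → EuclideanSpace ℝ (Fin d))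
    (c : Fin n → Fin k) : Prop :=
  ∀ x' : Fin n → EuclideanSpace ℝ (Fin d),
    (∀ i, ‖x' i - x i‖ ≤ ε * D) → IsOptimalClustering x' c

section InnerProduct

variable {E : Type*} [NormedAddCommGroup E] [InnerProductSpace ℝ E]

lemma sum_norm_sub_mean_sq_le {ι : Type*} (s : Finset ι) (y : ι → E) (z : E) :
    ∑ i ∈ s, ‖y i - (#s : ℝ)⁻¹ • ∑ i ∈ s, y i‖ ^ 2 ≤ ∑ i ∈ s, ‖y i - z‖ ^ 2 := by
  rcases s.eq_empty_or_nonempty with rfl | hs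
  · simp
  set μ := (#s : ℝ)⁻¹ • ∑ i ∈ s, y i
  have hcard : (#s : ℝ) ≠ 0 := Nat.cast_ne_zero.mpr hs.card_pos.ne'
  have hcentered : ∑ i ∈ s, (y i - μ) = 0 := by
    rw [Finset.sum_sub_distrib, Finset.sum_const, ← Nat.cast_smul_eq_nsmul ℝ, smul_smul,
      mul_inv_cancel₀ hcard, one_smul, sub_self]
  have hcross : ∑ i ∈ s, 2 * ⟪y i - μ, μ - z⟫ = 0 := by
    rw [← Finset.mul_sum, ← sum_inner, hcentered, inner_zero_left, mul_zero]
  have hsplit : ∑ i ∈ s, ‖y i - z‖ ^ 2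
      = ∑ i ∈ s, ‖y i - μ‖ ^ 2 + #s * ‖μ - z‖ ^ 2 := by
    have h : ∀ i ∈ s, ‖y i - z‖ ^ 2 = ‖y i - μ‖ ^ 2 + 2 * ⟪y i - μ, μ - z⟫ + ‖μ - z‖ ^ 2 :=
      fun i _ => by rw [← sub_add_sub_cancel (y i) μ z, norm_add_sq_real]
    rw [Finset.sum_congr rfl h, Finset.sum_add_distrib, Finset.sum_add_distrib, hcross,
      Finset.sum_const, nsmul_eq_mul, add_zero]
  rw [hsplit]
  exact le_add_of_nonneg_right (by positivity)

lemma norm_sub_sq_sub_norm_sub_sq (q a b : E) :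
    ‖q - b‖ ^ 2 - ‖q - a‖ ^ 2 = 2 * ⟪q - (2 : ℝ)⁻¹ • (a + b), a - b⟫ := by
  simp only [norm_sub_sq_real, inner_sub_left, inner_sub_right, inner_add_left,
    real_inner_smul_left, real_inner_self_eq_norm_sq, real_inner_comm a b]
  ring

/-- Witness: `a` moves by `w`, every other point of `s` by `-w / (#s - 1)`. -/
lemma exists_shift_sum_eq_zero {ι : Type*} [DecidableEq ι] {s : Finset ι} {a : ι}
    (ha : a ∈ s) (hs : 2 ≤ #s) (w : E) :
    ∃ δ : ι → E, δ a = w ∧ (∀ i, ‖δ i‖ ≤ ‖w‖) ∧ (∀ i ∉ s, δ i = 0) ∧ ∑ i ∈ s, δ i = 0 := by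
  set r : ℝ := ((#s - 1 : ℕ) : ℝ)
  have hr : 1 ≤ r := by
    simp only [r, Nat.one_le_cast]
    omega
  refine ⟨fun i => if i = a then w else if i ∈ s then -(r⁻¹ • w) else 0, if_pos rfl,
    fun i => ?_, fun i hi => ?_, ?_⟩
  · dsimp only
    split_ifs
    · exact le_rfl
    · rw [norm_neg, norm_smul, norm_inv, Real.norm_of_nonneg (by linarith)]
      exact mul_le_of_le_one_left (norm_nonneg w) (inv_le_one_of_one_le₀ hr)
    · simp
  · simp [hi, ne_of_mem_of_not_mem ha hi |>.symm]
  · rw [← Finset.add_sum_erase s _ ha, if_pos rfl,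
      Finset.sum_congr rfl fun i hi => by
        rw [if_neg (Finset.ne_of_mem_erase hi), if_pos (Finset.mem_of_mem_erase hi)],
      Finset.sum_const, Finset.card_erase_of_mem ha, ← Nat.cast_smul_eq_nsmul ℝ, smul_neg,
      smul_smul, mul_inv_cancel₀ (by positivity), one_smul, add_neg_cancel]

lemma mul_norm_le_inner_inv_norm_smul {ε : ℝ} {y e : E} (h : ε * ‖e‖ ^ 2 ≤ ⟪y, e⟫) :
    ε * ‖e‖ ≤ ⟪y, ‖e‖⁻¹ • e⟫ := by
  rcases eq_or_ne ‖e‖ 0 with he | he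
  · simp [he]
  rw [real_inner_smul_right, le_inv_mul_iff₀ ((norm_nonneg e).lt_of_ne' he)]
  linarith

end InnerProduct

section KMeans

variable {d n k : ℕ}

lemma kmeansCost_le_sum_norm_sub_sq (x : Fin n → EuclideanSpace ℝ (Fin d)) (c : Fin n → Fin k)
    (z : Fin k → EuclideanSpace ℝ (Fin d)) :
    kmeansCost x c ≤ ∑ i, ‖x i - z (c i)‖ ^ 2 := by
  unfold kmeansCost
  rw [← Finset.sum_fiberwise univ c (fun i => ‖x i - clusterMean x c (c i)‖ ^ 2),
    ← Finset.sum_fiberwise univ c (fun i => ‖x i - z (c i)‖ ^ 2)]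
  refine Finset.sum_le_sum fun j _ => ?_
  calc ∑ i with c i = j, ‖x i - clusterMean x c (c i)‖ ^ 2
      = ∑ i with c i = j, ‖x i - clusterMean x c j‖ ^ 2 :=
        Finset.sum_congr rfl fun i hi => by rw [(Finset.mem_filter.mp hi).2]
    _ ≤ ∑ i with c i = j, ‖x i - z j‖ ^ 2 := sum_norm_sub_mean_sq_le _ _ _
    _ = ∑ i with c i = j, ‖x i - z (c i)‖ ^ 2 :=
        Finset.sum_congr rfl fun i hi => by rw [(Finset.mem_filter.mp hi).2]

lemma clusterMean_add_of_sum_eq_zero {x δ : Fin n → EuclideanSpace ℝ (Fin d)} {c : Fin n → Fin k}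
    (hδ : ∀ j, ∑ i with c i = j, δ i = 0) : clusterMean (x + δ) c = clusterMean x c := by
  funext j
  simp only [clusterMean, Pi.add_apply, Finset.sum_add_distrib, hδ, add_zero]

/-- Reassigning `a` alone to cluster `j` while keeping the means cannot lower the cost. -/
lemma IsOptimalClustering.norm_sub_clusterMean_sq_le {x : Fin n → EuclideanSpace ℝ (Fin d)}
    {c : Fin n → Fin k} (h : IsOptimalClustering x c) (a : Fin n) (j : Fin k) :
    ‖x a - clusterMean x c (c a)‖ ^ 2 ≤ ‖x a - clusterMean x c j‖ ^ 2 := by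
  set cost : Fin n → ℝ := fun i => ‖x i - clusterMean x c (c i)‖ ^ 2
  have hreassign : ∑ i, ‖x i - clusterMean x c (Function.update c a j i)‖ ^ 2
      = ‖x a - clusterMean x c j‖ ^ 2 + ∑ i ∈ univ \ {a}, cost i := by
    simp only [Function.apply_update (fun i t => ‖x i - clusterMean x c t‖ ^ 2)]
    exact Finset.sum_update_of_mem (Finset.mem_univ a) _ _
  have hcost : kmeansCost x c = cost a + ∑ i ∈ univ \ {a}, cost i :=
    Finset.sum_eq_add_sum_sdiff_singleton_of_mem (Finset.mem_univ a) cost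
  have := (h (Function.update c a j)).trans (kmeansCost_le_sum_norm_sub_sq x _ (clusterMean x c))
  linarith

end KMeans

lemma IsAPS.mul_norm_sq_le_inner_sub_midpoint {d n k : ℕ} {ε : ℝ} (hε : 0 ≤ ε)
    {x : Fin n → EuclideanSpace ℝ (Fin d)} {c : Fin n → Fin k} {j j' : Fin k}
    (haps : IsAPS ε ‖clusterMean x c j - clusterMean x c j'‖ x c)
    (hsize : 2 ≤ #{i | c i = j}) {a : Fin n} (ha : c a = j) :
    ε * ‖clusterMean x c j - clusterMean x c j'‖ ^ 2 ≤
      ⟪x a - (2 : ℝ)⁻¹ • (clusterMean x c j + clusterMean x c j'),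
        clusterMean x c j - clusterMean x c j'⟫ := by
  set μ := clusterMean x c
  set e := μ j - μ j'
  set p := (2 : ℝ)⁻¹ • (μ j + μ j')
  obtain ⟨δ, hδa, hδle, hδout, hδsum⟩ :=
    exists_shift_sum_eq_zero (s := {i | c i = j}) (by simpa using ha) hsize (-(ε • e))
  have hmean : clusterMean (x + δ) c = μ := clusterMean_add_of_sum_eq_zero fun j'' => by
    by_cases h : j'' = j
    · exact h ▸ hδsum
    · exact Finset.sum_eq_zero fun i hi => hδout i (by simp_all)
  have hopt : IsOptimalClustering (x + δ) c := haps _ fun i => by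
    simpa [norm_smul, abs_of_nonneg hε] using hδle i
  have hclose : 0 ≤ 2 * ⟪(x + δ) a - p, e⟫ := by
    have h := hopt.norm_sub_clusterMean_sq_le a j'
    rwa [hmean, ha, ← sub_nonneg, norm_sub_sq_sub_norm_sub_sq] at h
  have hshift : ⟪(x + δ) a - p, e⟫ = ⟪x a - p, e⟫ - ε * ‖e‖ ^ 2 := by
    rw [Pi.add_apply, hδa, ← sub_eq_add_neg, sub_right_comm, inner_sub_left,
      real_inner_smul_left, real_inner_self_eq_norm_sq]
  linarith

open Classical in
theorem aps_two_means_margin_general {d n : ℕ} (ε : ℝ) (hε : 0 < ε)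
    (x : Fin n → EuclideanSpace ℝ (Fin d)) (c : Fin n → Fin 2)
    (hsize : ∀ j : Fin 2, 4 ≤ (Finset.univ.filter (fun i => c i = j)).card)
    (haps : IsAPS ε ‖clusterMean x c 0 - clusterMean x c 1‖ x c) :
    let μ₁ := clusterMean x c 0
    let μ₂ := clusterMean x c 1
    let D := ‖μ₁ - μ₂‖
    let u := D⁻¹ • (μ₁ - μ₂)
    let p := (2 : ℝ)⁻¹ • (μ₁ + μ₂)
    ∀ i : Fin n,
      ε * D ≤ |⟪x i - p, u⟫| ∧
      (c i = 0 → ε * D ≤ ⟪x i - p, u⟫) ∧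
      (c i = 1 → ⟪x i - p, u⟫ ≤ -(ε * D)) := by
  intro μ₁ μ₂ D u p i
  have hmargin {j j' : Fin 2} (haps : IsAPS ε ‖clusterMean x c j - clusterMean x c j'‖ x c)
      (hi : c i = j) :=
    mul_norm_le_inner_inv_norm_smul
      (haps.mul_norm_sq_le_inner_sub_midpoint hε.le ((by norm_num : 2 ≤ 4).trans (hsize j)) hi)
  obtain h0 | h1 : c i = 0 ∨ c i = 1 := by omega
  · have h : ε * D ≤ ⟪x i - p, u⟫ := hmargin haps h0
    exact ⟨h.trans (le_abs_self _), fun _ => h, fun h1 => absurd (h0.symm.trans h1) (by decide)⟩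
  · have h : ε * D ≤ -⟪x i - p, u⟫ := by
      have h := hmargin (j := 1) (j' := 0) (norm_sub_rev μ₁ μ₂ ▸ haps) h1
      rwa [norm_sub_rev, add_comm, ← neg_sub μ₁ μ₂, smul_neg, inner_neg_right] at h
    exact ⟨h.trans (neg_le_abs _), fun h0 => absurd (h1.symm.trans h0) (by decide),
      fun _ => by linarith⟩

open Classical in
/-- Margin condition in an `ε`-APS 2-means instance: every point satisfies
`|⟨x−p,u⟩| ≥ εD`, with points of `C₁` on the positive side and points of `C₂`
on the negative side. -/
theorem aps_two_means_margin {d n : ℕ} (ε : ℝ) (hε : 0 < ε)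
    (x : Fin n → EuclideanSpace ℝ (Fin d)) (c : Fin n → Fin 2)
    (hsize : ∀ j : Fin 2, 4 ≤ (Finset.univ.filter (fun i => c i = j)).card)
    (hopt : IsUniqueOptimalClustering x c)
    (haps : IsAPS ε ‖clusterMean x c 0 - clusterMean x c 1‖ x c) :
    let μ₁ := clusterMean x c 0
    let μ₂ := clusterMean x c 1
    let D := ‖μ₁ - μ₂‖
    let u := D⁻¹ • (μ₁ - μ₂)
    let p := (2 : ℝ)⁻¹ • (μ₁ + μ₂)
    ∀ i : Fin n,
      ε * D ≤ |⟪x i - p, u⟫| ∧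
      (c i = 0 → ε * D ≤ ⟪x i - p, u⟫) ∧
      (c i = 1 → ⟪x i - p, u⟫ ≤ -(ε * D)) :=
  aps_two_means_margin_general ε hε x c hsize haps
end

section
/- Let a ∈ C₁ and b ∈ C₂ be points of an ε-APS 2-means instance satisfying ⟨a−p,u⟩ ≤ Δ/2 and ⟨b−p,−u⟩ ≤ Δ/2, where Δ ≤ D/2. Then 2εD ≤ ‖a−b‖ ≤ √((1+ε²)/ε²)·D. -/
/-!
Projecting onto `u`: the margin condition puts `a` and `b` on opposite sides of the bisecting
hyperplane, each at distance at least `εD`, so `‖a - b‖ ≥ ⟪a - b, u⟫ ≥ 2εD`. Conversely the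
angular condition gives `‖x - p‖ ≤ (√(1 + ε²) / ε) |⟪x - p, u⟫| ≤ (√(1 + ε²) / ε) Δ / 2` for
`x = a, b`, and the triangle inequality through `p` together with `Δ ≤ D` bounds `‖a - b‖`.
-/

open RealInnerProductSpace

section InnerProductSpace

variable {E : Type*} [NormedAddCommGroup E] [InnerProductSpace ℝ E]

lemma two_mul_le_norm_sub_of_le_inner {u a b p : E} {m : ℝ} (hu : ‖u‖ = 1)
    (ha : m ≤ ⟪a - p, u⟫) (hb : m ≤ -⟪b - p, u⟫) : 2 * m ≤ ‖a - b‖ := by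
  have hsplit : ⟪a - b, u⟫ = ⟪a - p, u⟫ - ⟪b - p, u⟫ := by
    rw [← inner_sub_left, sub_sub_sub_cancel_right]
  calc 2 * m ≤ ⟪a - b, u⟫ := by linarith
    _ ≤ ‖a - b‖ * ‖u‖ := real_inner_le_norm _ _
    _ = ‖a - b‖ := by rw [hu, mul_one]

lemma norm_le_div_of_mul_norm_le_abs_inner {u v : E} {c t : ℝ} (hc : 0 < c)
    (hangle : c * ‖v‖ ≤ |⟪v, u⟫|) (ht : |⟪v, u⟫| ≤ t) : ‖v‖ ≤ t / c := by
  rw [le_div_iff₀ hc, mul_comm]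
  exact hangle.trans ht

end InnerProductSpace

lemma sqrt_one_add_sq_div_sq {ε : ℝ} (hε : 0 < ε) :
    Real.sqrt ((1 + ε ^ 2) / ε ^ 2) = (ε / Real.sqrt (1 + ε ^ 2))⁻¹ := by
  rw [Real.sqrt_div (by positivity), Real.sqrt_sq hε.le, inv_div]

/-- For points `a ∈ C₁`, `b ∈ C₂` near the means (`⟨a−p,u⟩ ≤ Δ/2`, `⟨b−p,−u⟩ ≤ Δ/2`)
in an `ε`-APS 2-means instance (satisfying the margin and angular conditions),
`2εD ≤ ‖a−b‖ ≤ √((1+ε²)/ε²)·D`. -/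
theorem delta_approx {d : ℕ} (ε D Δ : ℝ) (hε : 0 < ε) (hD : 0 < D)
    (hΔ : Δ = (1 / 2 - ε) * D)
    (u p : EuclideanSpace ℝ (Fin d)) (hu : ‖u‖ = 1)
    (X : Finset (EuclideanSpace ℝ (Fin d)))
    (hmargin : ∀ x ∈ X, ε * D ≤ |⟪x - p, u⟫|)
    (hangular : ∀ x ∈ X, (ε / Real.sqrt (1 + ε ^ 2)) * ‖x - p‖ ≤ |⟪x - p, u⟫|)
    (a b : EuclideanSpace ℝ (Fin d)) (ha : a ∈ X) (hb : b ∈ X)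
    (hau : ⟪a - p, u⟫ ≤ Δ / 2) (hbu : ⟪b - p, -u⟫ ≤ Δ / 2)
    (haC : 0 < ⟪a - p, u⟫) (hbC : ⟪b - p, u⟫ < 0) :
    2 * ε * D ≤ ‖a - b‖ ∧ ‖a - b‖ ≤ Real.sqrt ((1 + ε ^ 2) / ε ^ 2) * D := by
  have habs_a : |⟪a - p, u⟫| = ⟪a - p, u⟫ := abs_of_pos haC
  have habs_b : |⟪b - p, u⟫| = -⟪b - p, u⟫ := abs_of_neg hbC
  rw [inner_neg_right] at hbu
  constructor
  · rw [mul_assoc]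
    exact two_mul_le_norm_sub_of_le_inner hu (habs_a ▸ hmargin a ha) (habs_b ▸ hmargin b hb)
  · set c := ε / Real.sqrt (1 + ε ^ 2)
    have hc : 0 < c := by positivity
    have hna : ‖a - p‖ ≤ Δ / 2 / c :=
      norm_le_div_of_mul_norm_le_abs_inner hc (hangular a ha) (by rwa [habs_a])
    have hnb : ‖b - p‖ ≤ Δ / 2 / c :=
      norm_le_div_of_mul_norm_le_abs_inner hc (hangular b hb) (by rwa [habs_b])
    have hΔD : Δ ≤ D := by nlinarith
    rw [sqrt_one_add_sq_div_sq hε, inv_mul_eq_div]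
    calc ‖a - b‖ ≤ ‖a - p‖ + ‖b - p‖ := by
          simpa only [dist_eq_norm] using dist_triangle_right a b p
      _ ≤ Δ / 2 / c + Δ / 2 / c := add_le_add hna hnb
      _ = Δ / c := by rw [← add_div, add_halves]
      _ ≤ D / c := by gcongr
end

section
/- If two clusters are (ρ,Δ,ε)-separated, then for any x ∈ C_i and y ∈ C_j, ‖x − y‖ ≥ ρ. Consequently, in a graph on the point set where edges join points at distance less than r ≤ ρ, no connected component contains points from two different clusters. -/
/-! Projected onto the unit direction `u` of `μi - μj`, points of `Ci` lie at least `Dij/2 - Δ`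
beyond `p` and points of `Cj` at least as far before it, so cross-cluster distances are at least
`Dij - 2Δ ≥ ρ`. Hence no edge of the graph with threshold `r ≤ ρ` leaves `Ci`, and a path from
`Ci` to `Cj` would end at a point of `Ci ∩ Cj`, at distance `0 < ρ` from itself. -/

open RealInnerProductSpace Finset Classical

/-- The geometric graph on a finite point set: edges join distinct points at
Euclidean distance less than `r`. -/
def geomGraph {d : ℕ} (P : Finset (EuclideanSpace ℝ (Fin d))) (r : ℝ) :
    SimpleGraph {z // z ∈ P} where
  Adj a b := a ≠ b ∧ dist (a : EuclideanSpace ℝ (Fin d)) (b : EuclideanSpace ℝ (Fin d)) < r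
  symm := ⟨fun a b h => ⟨h.1.symm, by rw [dist_comm]; exact h.2⟩⟩
  loopless := ⟨fun a h => h.1 rfl⟩

theorem norm_inv_norm_smul_le_one {E : Type*} [NormedAddCommGroup E] [NormedSpace ℝ E] (v : E) :
    ‖‖v‖⁻¹ • v‖ ≤ 1 := by
  rw [norm_smul, norm_inv, norm_norm]
  exact inv_mul_le_one_of_le₀ le_rfl (norm_nonneg v)

theorem le_norm_sub_of_le_inner {E : Type*} [NormedAddCommGroup E] [InnerProductSpace ℝ E]
    {x y p u : E} {a b : ℝ} (hu : ‖u‖ ≤ 1) (hx : a ≤ ⟪x - p, u⟫) (hy : b ≤ ⟪y - p, -u⟫) :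
    a + b ≤ ‖x - y‖ :=
  calc a + b ≤ ⟪x - p, u⟫ - ⟪y - p, u⟫ := by rw [inner_neg_right] at hy; linarith
    _ = ⟪x - y, u⟫ := by rw [← inner_sub_left, sub_sub_sub_cancel_right]
    _ ≤ ‖x - y‖ * ‖u‖ := real_inner_le_norm _ _
    _ ≤ ‖x - y‖ := mul_le_of_le_one_right (norm_nonneg _) hu

theorem SimpleGraph.Reachable.mem_of_adj_closed {V : Type*} {G : SimpleGraph V} {S : Set V}
    (hS : ∀ v w, G.Adj v w → v ∈ S → w ∈ S) {v w : V} (h : G.Reachable v w) (hv : v ∈ S) :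
    w ∈ S := by
  obtain ⟨p⟩ := h
  by_contra hw
  obtain ⟨d, -, hd, hd'⟩ := p.exists_boundary_dart S hv hw
  exact hd' (hS _ _ d.adj hd)

theorem geomGraph_not_reachable_of_le_dist {d : ℕ} {A B : Finset (EuclideanSpace ℝ (Fin d))}
    {ρ r : ℝ} (hρ : 0 < ρ) (hr : r ≤ ρ) (hAB : ∀ x ∈ A, ∀ y ∈ B, ρ ≤ dist x y)
    (a b : {z // z ∈ A ∪ B}) (ha : (a : EuclideanSpace ℝ (Fin d)) ∈ A)
    (hb : (b : EuclideanSpace ℝ (Fin d)) ∈ B) :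
    ¬ (geomGraph (A ∪ B) r).Reachable a b := by
  have hclosed (v w : {z // z ∈ A ∪ B}) (hvw : (geomGraph (A ∪ B) r).Adj v w)
      (hv : (v : EuclideanSpace ℝ (Fin d)) ∈ A) : (w : EuclideanSpace ℝ (Fin d)) ∈ A :=
    (Finset.mem_union.1 w.2).resolve_right fun hw => (hAB _ hv _ hw).not_gt (hvw.2.trans_le hr)
  intro hab
  have hbA : (b : EuclideanSpace ℝ (Fin d)) ∈ A :=
    hab.mem_of_adj_closed (S := {z : {z // z ∈ A ∪ B} | (z : EuclideanSpace ℝ (Fin d)) ∈ A})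
      hclosed ha
  simpa [hρ.not_ge] using hAB _ hbA _ hb

theorem separated_clusters_far_and_disconnected_general {d : ℕ} (ρ Δ ε : ℝ)
    (hρ : 0 < ρ)
    (Ci Cj : Finset (EuclideanSpace ℝ (Fin d)))
    (μi μj : EuclideanSpace ℝ (Fin d))
    (Dij : ℝ) (hDij : Dij = ‖μi - μj‖) (hDρ : ρ + 2 * Δ ≤ Dij)
    (u p : EuclideanSpace ℝ (Fin d))
    (hu : u = Dij⁻¹ • (μi - μj))
    (hsepi : ∀ x ∈ Ci, Dij / 2 - Δ ≤ ⟪x - p, u⟫ ∧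
      ‖(x - p) - ⟪x - p, u⟫ • u‖ ≤ ε⁻¹ * (⟪x - p, u⟫ - (Dij / 2 - Δ)))
    (hsepj : ∀ y ∈ Cj, Dij / 2 - Δ ≤ ⟪y - p, -u⟫ ∧
      ‖(y - p) - ⟪y - p, u⟫ • u‖ ≤ ε⁻¹ * (⟪y - p, -u⟫ - (Dij / 2 - Δ))) :
    (∀ x ∈ Ci, ∀ y ∈ Cj, ρ ≤ ‖x - y‖) ∧
    ∀ r : ℝ, r ≤ ρ →
      ∀ a b : {z // z ∈ Ci ∪ Cj}, (a : EuclideanSpace ℝ (Fin d)) ∈ Ci →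
        (b : EuclideanSpace ℝ (Fin d)) ∈ Cj →
        ¬ (geomGraph (Ci ∪ Cj) r).Reachable a b := by
  have hu_le : ‖u‖ ≤ 1 := by
    rw [hu, hDij]
    exact norm_inv_norm_smul_le_one (μi - μj)
  have hfar (x : EuclideanSpace ℝ (Fin d)) (hx : x ∈ Ci) (y : EuclideanSpace ℝ (Fin d))
      (hy : y ∈ Cj) : ρ ≤ ‖x - y‖ :=
    calc ρ ≤ (Dij / 2 - Δ) + (Dij / 2 - Δ) := by linarith
      _ ≤ ‖x - y‖ := le_norm_sub_of_le_inner hu_le (hsepi x hx).1 (hsepj y hy).1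
  refine ⟨hfar, fun r hr => geomGraph_not_reachable_of_le_dist hρ hr ?_⟩
  simpa only [dist_eq_norm] using hfar

/-- If two clusters are `(ρ,Δ,ε)`-separated then all cross-cluster distances are at
least `ρ`; consequently in the graph joining points at distance less than `r ≤ ρ`,
no connected component contains points of both clusters. -/
theorem separated_clusters_far_and_disconnected {d : ℕ} (ρ Δ ε : ℝ)
    (hρ : 0 < ρ) (hΔ : 0 < Δ) (hε : 0 < ε)
    (Ci Cj : Finset (EuclideanSpace ℝ (Fin d)))
    (μi μj : EuclideanSpace ℝ (Fin d)) (hμ : μi ≠ μj)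
    (Dij : ℝ) (hDij : Dij = ‖μi - μj‖) (hDρ : ρ + 2 * Δ ≤ Dij)
    (u p : EuclideanSpace ℝ (Fin d))
    (hu : u = Dij⁻¹ • (μi - μj)) (hp : p = (2 : ℝ)⁻¹ • (μi + μj))
    (hsepi : ∀ x ∈ Ci, Dij / 2 - Δ ≤ ⟪x - p, u⟫ ∧
      ‖(x - p) - ⟪x - p, u⟫ • u‖ ≤ ε⁻¹ * (⟪x - p, u⟫ - (Dij / 2 - Δ)))
    (hsepj : ∀ y ∈ Cj, Dij / 2 - Δ ≤ ⟪y - p, -u⟫ ∧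
      ‖(y - p) - ⟪y - p, u⟫ • u‖ ≤ ε⁻¹ * (⟪y - p, -u⟫ - (Dij / 2 - Δ))) :
    (∀ x ∈ Ci, ∀ y ∈ Cj, ρ ≤ ‖x - y‖) ∧
    ∀ r : ℝ, r ≤ ρ →
      ∀ a b : {z // z ∈ Ci ∪ Cj}, (a : EuclideanSpace ℝ (Fin d)) ∈ Ci →
        (b : EuclideanSpace ℝ (Fin d)) ∈ Cj →
        ¬ (geomGraph (Ci ∪ Cj) r).Reachable a b :=
  separated_clusters_far_and_disconnected_general ρ Δ ε hρ Ci Cj μi μj Dij hDij hDρ u p hu hsepi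
    hsepj
end

section
/- In a (ρ,Δ,ε)-separated pair of clusters, the 'nice' region N_{i,j} = {x in the cone of C_i toward C_j : ⟨x−μ_i, u⟩ ≤ Δ} satisfies: every x ∈ N_{i,j} has ‖x − μ_i‖ ≤ Δ/ε, and N_{i,j} ∩ C_i is nonempty. -/
open RealInnerProductSpace Finset

/-!
Write `w = x - μᵢ` as `t • u` plus a component orthogonal to `u`. In the nice region that
component has norm at most `ε⁻¹ (Δ - |t|)`, so `‖w‖ ≤ ε⁻¹ (Δ - |t|) + |t| ≤ ε⁻¹ Δ` since `ε⁻¹ ≥ 1`.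
Because `μᵢ` is the mean of `Cᵢ`, the values `⟪x - μᵢ, u⟫` over `Cᵢ` sum to zero, so one of them
is `≤ 0`; for that `x` the cone condition with apex `μᵢ - Δ • u` is exactly membership in the
nice region.
-/

section InnerProductSpace

variable {E : Type*} [NormedAddCommGroup E] [InnerProductSpace ℝ E] {u : E}

lemma norm_le_of_norm_sub_inner_smul_le (hu : ‖u‖ = 1) {c Δ : ℝ} (hc : 1 ≤ c) {w : E}
    (hw : ‖w - ⟪w, u⟫ • u‖ ≤ c * (Δ - |⟪w, u⟫|)) : ‖w‖ ≤ c * Δ := by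
  have h_proj : ‖⟪w, u⟫ • u‖ = |⟪w, u⟫| := by rw [norm_smul, hu, Real.norm_eq_abs, mul_one]
  calc ‖w‖ ≤ ‖w - ⟪w, u⟫ • u‖ + ‖⟪w, u⟫ • u‖ := norm_le_norm_sub_add w _
    _ ≤ c * (Δ - |⟪w, u⟫|) + |⟪w, u⟫| := by rw [h_proj]; gcongr
    _ ≤ c * Δ := by nlinarith [abs_nonneg ⟪w, u⟫]

lemma inner_add_smul_unit (hu : ‖u‖ = 1) (w : E) (a : ℝ) : ⟪w + a • u, u⟫ = ⟪w, u⟫ + a := by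
  rw [inner_add_left, real_inner_smul_left, real_inner_self_eq_norm_sq, hu, one_pow, mul_one]

lemma add_smul_sub_inner_smul_unit (hu : ‖u‖ = 1) (w : E) (a : ℝ) :
    (w + a • u) - ⟪w + a • u, u⟫ • u = w - ⟪w, u⟫ • u := by
  rw [inner_add_smul_unit hu, add_smul]; abel

lemma norm_sub_inner_smul_le_of_mem_cone (hu : ‖u‖ = 1) {c Δ : ℝ} {x μ : E}
    (hcone : ‖(x - (μ - Δ • u)) - ⟪x - (μ - Δ • u), u⟫ • u‖ ≤ c * ⟪x - (μ - Δ • u), u⟫)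
    (hx : ⟪x - μ, u⟫ ≤ 0) :
    ‖(x - μ) - ⟪x - μ, u⟫ • u‖ ≤ c * (Δ - |⟪x - μ, u⟫|) := by
  have h_apex : x - (μ - Δ • u) = (x - μ) + Δ • u := by abel
  rw [h_apex, add_smul_sub_inner_smul_unit hu, inner_add_smul_unit hu] at hcone
  rwa [abs_of_nonpos hx, sub_neg_eq_add, add_comm Δ]

lemma Finset.sum_sub_eq_zero_of_eq_average {s : Finset E} (hs : s.Nonempty) {μ : E}
    (hμ : μ = (#s : ℝ)⁻¹ • ∑ x ∈ s, x) : ∑ x ∈ s, (x - μ) = 0 := by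
  have hcard : (#s : ℝ) ≠ 0 := by exact_mod_cast hs.card_pos.ne'
  rw [sum_sub_distrib, sum_const, hμ, ← Nat.cast_smul_eq_nsmul ℝ, smul_smul,
    mul_inv_cancel₀ hcard, one_smul, sub_self]

lemma Finset.exists_inner_sub_nonpos_of_eq_average {s : Finset E} (hs : s.Nonempty) {μ : E}
    (hμ : μ = (#s : ℝ)⁻¹ • ∑ x ∈ s, x) (u : E) : ∃ x ∈ s, ⟪x - μ, u⟫ ≤ 0 := by
  refine exists_le_of_sum_le hs ?_
  rw [← sum_inner, sum_sub_eq_zero_of_eq_average hs hμ, inner_zero_left, sum_const_zero]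

end InnerProductSpace

theorem nice_region_properties_general {d : ℕ} (ε Δ : ℝ) (hε0 : 0 < ε) (hε1 : ε ≤ 1)
    (u : EuclideanSpace ℝ (Fin d)) (hu : ‖u‖ = 1)
    (Ci : Finset (EuclideanSpace ℝ (Fin d))) (hCi : Ci.Nonempty)
    (μi : EuclideanSpace ℝ (Fin d)) (hμi : μi = ((Ci.card : ℝ))⁻¹ • ∑ x ∈ Ci, x)
    (hcone : ∀ x ∈ Ci,
      ‖(x - (μi - Δ • u)) - ⟪x - (μi - Δ • u), u⟫ • u‖ ≤
        ε⁻¹ * ⟪x - (μi - Δ • u), u⟫) :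
    (∀ x : EuclideanSpace ℝ (Fin d),
      ‖(x - μi) - ⟪x - μi, u⟫ • u‖ ≤ ε⁻¹ * (Δ - |⟪x - μi, u⟫|) → ‖x - μi‖ ≤ Δ / ε) ∧
    ∃ x ∈ Ci, ‖(x - μi) - ⟪x - μi, u⟫ • u‖ ≤ ε⁻¹ * (Δ - |⟪x - μi, u⟫|) := by
  have hε_inv : 1 ≤ ε⁻¹ := one_le_inv₀ hε0 |>.mpr hε1
  refine ⟨fun x hx => ?_, ?_⟩
  · rw [div_eq_inv_mul]
    exact norm_le_of_norm_sub_inner_smul_le hu hε_inv hx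
  · obtain ⟨x, hx, hx_le⟩ := Ci.exists_inner_sub_nonpos_of_eq_average hCi hμi u
    exact ⟨x, hx, norm_sub_inner_smul_le_of_mem_cone hu (hcone x hx) hx_le⟩

/-- The nice region `N_{i,j} = {x in the cone of C_i toward C_j : ⟨x−μ_i,u⟩ ≤ Δ}`,
i.e. points with `‖(x−μ_i)_{(V)}‖ ≤ (1/ε)(Δ − ‖(x−μ_i)_{(u)}‖)`, satisfies:
every point of it is within distance `Δ/ε` of `μ_i`, and it contains a point of `C_i`. -/
theorem nice_region_properties {d : ℕ} (ε Δ : ℝ) (hε0 : 0 < ε) (hε1 : ε ≤ 1)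
    (hΔ : 0 < Δ) (u : EuclideanSpace ℝ (Fin d)) (hu : ‖u‖ = 1)
    (Ci : Finset (EuclideanSpace ℝ (Fin d))) (hCi : Ci.Nonempty)
    (μi : EuclideanSpace ℝ (Fin d)) (hμi : μi = ((Ci.card : ℝ))⁻¹ • ∑ x ∈ Ci, x)
    (hcone : ∀ x ∈ Ci,
      ‖(x - (μi - Δ • u)) - ⟪x - (μi - Δ • u), u⟫ • u‖ ≤
        ε⁻¹ * ⟪x - (μi - Δ • u), u⟫) :
    (∀ x : EuclideanSpace ℝ (Fin d),
      ‖(x - μi) - ⟪x - μi, u⟫ • u‖ ≤ ε⁻¹ * (Δ - |⟪x - μi, u⟫|) → ‖x - μi‖ ≤ Δ / ε) ∧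
    ∃ x ∈ Ci, ‖(x - μi) - ⟪x - μi, u⟫ • u‖ ≤ ε⁻¹ * (Δ - |⟪x - μi, u⟫|) :=
  nice_region_properties_general ε Δ hε0 hε1 u hu Ci hCi μi hμi hcone
end

section
/- Suppose a_i, a_j ∈ ℝ^d satisfy: ‖(a_i−a_j)_{(u)}‖ ≥ ‖(a_i−a_j)_{(V)}‖/ε, ⟨(a_i+a_j)/2 − p, u⟩ ≤ Δ/2, ‖((a_i+a_j)/2 − p)_{(V)}‖ ≤ Δ/ε, and ⟨a_i − a_j, u⟩ > 0. If ρ ≥ 7Δ, then every x ∈ C_i (satisfying the (ρ,Δ,ε)-separation cone condition with ⟨x−p,u⟩ ≥ ρ/2) satisfies ⟨(x−p) − ((a_i+a_j)/2 − p), a_i − a_j⟩ ≥ (ρ/2 − 3Δ)·‖(a_i−a_j)_{(u)}‖ > 0; in particular x is strictly closer to a_i than to a_j. -/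
open RealInnerProductSpace

/-!
Split every vector into its component along `u` and its part orthogonal to `u`. Along `u`,
`x - p` is at least `ρ/2`, while `m - p` is at most `Δ/2` for the midpoint `m = (a_i + a_j)/2`,
and `a_i - a_j` points forward. The orthogonal parts are small: that of `a_i - a_j` is at most
`ε ⟨a_i - a_j, u⟩`, and those of `x - p` and `m - p` at most `(⟨x - p, u⟩ - ρ/2)/ε` and `Δ/ε`.
By Cauchy–Schwarz the orthogonal contribution to `⟨x - m, a_i - a_j⟩` therefore costs at most
`(⟨x - p, u⟩ - ρ/2 + Δ) ⟨a_i - a_j, u⟩`, leaving `(ρ/2 - 3Δ/2) ⟨a_i - a_j, u⟩ > 0`.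
-/

section

variable {E : Type*} [NormedAddCommGroup E] [InnerProductSpace ℝ E]

lemma real_inner_eq_mul_add_inner_sub_smul {u : E} (hu : ‖u‖ = 1) (a b : E) :
    ⟪a, b⟫ = ⟪a, u⟫ * ⟪b, u⟫ + ⟪a - ⟪a, u⟫ • u, b - ⟪b, u⟫ • u⟫ := by
  have huu : ⟪u, u⟫ = 1 := by rw [real_inner_self_eq_norm_sq, hu, one_pow]
  simp only [inner_sub_left, inner_sub_right, real_inner_smul_left, real_inner_smul_right,
    real_inner_comm u, huu]
  ring

lemma mul_le_inner_sub_of_cone {u y m w : E} (hu : ‖u‖ = 1) {ρ Δ ε : ℝ} (hε : 0 < ε)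
    (hw : ‖w - ⟪w, u⟫ • u‖ ≤ ε * ⟪w, u⟫)
    (hm_u : ⟪m, u⟫ ≤ Δ / 2) (hm_V : ‖m - ⟪m, u⟫ • u‖ ≤ Δ / ε)
    (hy_V : ‖y - ⟪y, u⟫ • u‖ ≤ ε⁻¹ * (⟪y, u⟫ - ρ / 2)) :
    (ρ / 2 - 3 * Δ / 2) * ⟪w, u⟫ ≤ ⟪y - m, w⟫ := by
  have hwu : 0 ≤ ⟪w, u⟫ := nonneg_of_mul_nonneg_right ((norm_nonneg _).trans hw) hε
  have hsplit : (y - m) - ⟪y - m, u⟫ • u = (y - ⟪y, u⟫ • u) - (m - ⟪m, u⟫ • u) := by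
    rw [inner_sub_left, sub_smul]; abel
  have hperp_norm : ‖(y - m) - ⟪y - m, u⟫ • u‖ ≤ ε⁻¹ * (⟪y, u⟫ - ρ / 2) + Δ / ε :=
    hsplit ▸ (norm_sub_le _ _).trans (add_le_add hy_V hm_V)
  have hperp : |⟪(y - m) - ⟪y - m, u⟫ • u, w - ⟪w, u⟫ • u⟫| ≤ (⟪y, u⟫ - ρ / 2 + Δ) * ⟪w, u⟫ :=
    calc _ ≤ ‖(y - m) - ⟪y - m, u⟫ • u‖ * ‖w - ⟪w, u⟫ • u‖ := abs_real_inner_le_norm _ _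
      _ ≤ (ε⁻¹ * (⟪y, u⟫ - ρ / 2) + Δ / ε) * (ε * ⟪w, u⟫) :=
          mul_le_mul hperp_norm hw (norm_nonneg _) ((norm_nonneg _).trans hperp_norm)
      _ = (⟪y, u⟫ - ρ / 2 + Δ) * ⟪w, u⟫ := by field_simp
  rw [real_inner_eq_mul_add_inner_sub_smul hu (y - m) w]
  nlinarith [neg_abs_le ⟪(y - m) - ⟪y - m, u⟫ • u, w - ⟪w, u⟫ • u⟫, inner_sub_left (𝕜 := ℝ) y m u]

lemma norm_sub_lt_norm_sub_of_inner_midpoint_pos {x a b : E}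
    (h : 0 < ⟪x - (2 : ℝ)⁻¹ • (a + b), a - b⟫) : ‖x - a‖ < ‖x - b‖ := by
  have hsq : ‖x - b‖ ^ 2 - ‖x - a‖ ^ 2 = 2 * ⟪x - (2 : ℝ)⁻¹ • (a + b), a - b⟫ := by
    simp only [norm_sub_sq_real, inner_sub_left, inner_sub_right, inner_add_left,
      real_inner_smul_left, real_inner_self_eq_norm_sq, real_inner_comm a b]
    ring
  exact lt_of_pow_lt_pow_left₀ 2 (norm_nonneg _) (by linarith)

end

theorem assign_correct_general {d : ℕ} (ρ Δ ε : ℝ)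
    (hε0 : 0 < ε) (hΔ : 0 < Δ) (hρ : 7 * Δ ≤ ρ)
    (u p ai aj : EuclideanSpace ℝ (Fin d)) (hu : ‖u‖ = 1)
    (h1 : ‖(ai - aj) - ⟪ai - aj, u⟫ • u‖ / ε ≤ |⟪ai - aj, u⟫|)
    (h2 : ⟪(2 : ℝ)⁻¹ • (ai + aj) - p, u⟫ ≤ Δ / 2)
    (h3 : ‖((2 : ℝ)⁻¹ • (ai + aj) - p) - ⟪(2 : ℝ)⁻¹ • (ai + aj) - p, u⟫ • u‖ ≤ Δ / ε)
    (hpos : 0 < ⟪ai - aj, u⟫)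
    (x : EuclideanSpace ℝ (Fin d))
    (hx_V : ‖(x - p) - ⟪x - p, u⟫ • u‖ ≤ ε⁻¹ * (⟪x - p, u⟫ - ρ / 2)) :
    (ρ / 2 - 3 * Δ) * |⟪ai - aj, u⟫| ≤
      ⟪(x - p) - ((2 : ℝ)⁻¹ • (ai + aj) - p), ai - aj⟫ ∧
    0 < ⟪(x - p) - ((2 : ℝ)⁻¹ • (ai + aj) - p), ai - aj⟫ ∧
    ‖x - ai‖ < ‖x - aj‖ := by
  rw [abs_of_pos hpos] at h1 ⊢
  have hw : ‖(ai - aj) - ⟪ai - aj, u⟫ • u‖ ≤ ε * ⟪ai - aj, u⟫ := by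
    rwa [div_le_iff₀ hε0, mul_comm] at h1
  have hmain : (ρ / 2 - 3 * Δ) * ⟪ai - aj, u⟫ ≤
      ⟪(x - p) - ((2 : ℝ)⁻¹ • (ai + aj) - p), ai - aj⟫ :=
    le_trans (by nlinarith) (mul_le_inner_sub_of_cone hu hε0 hw h2 h3 hx_V)
  have hlt := (mul_pos (by linarith) hpos).trans_le hmain
  refine ⟨hmain, hlt, ?_⟩
  rw [sub_sub_sub_cancel_right] at hlt
  exact norm_sub_lt_norm_sub_of_inner_midpoint_pos hlt

/-- Assignment correctness: under the bisector properties and `ρ ≥ 7Δ`, every point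
`x` of `C_i` (satisfying the separation cone condition with `⟨x−p,u⟩ ≥ ρ/2`) satisfies
`⟨(x−p) − ((a_i+a_j)/2 − p), a_i − a_j⟩ ≥ (ρ/2 − 3Δ)·‖(a_i−a_j)_{(u)}‖ > 0`;
in particular `x` is strictly closer to `a_i` than to `a_j`. -/
theorem assign_correct {d : ℕ} (ρ Δ ε : ℝ)
    (hε0 : 0 < ε) (hε1 : ε ≤ 1 / 2) (hΔ : 0 < Δ) (hρ : 7 * Δ ≤ ρ)
    (u p ai aj : EuclideanSpace ℝ (Fin d)) (hu : ‖u‖ = 1)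
    (h1 : ‖(ai - aj) - ⟪ai - aj, u⟫ • u‖ / ε ≤ |⟪ai - aj, u⟫|)
    (h2 : ⟪(2 : ℝ)⁻¹ • (ai + aj) - p, u⟫ ≤ Δ / 2)
    (h3 : ‖((2 : ℝ)⁻¹ • (ai + aj) - p) - ⟪(2 : ℝ)⁻¹ • (ai + aj) - p, u⟫ • u‖ ≤ Δ / ε)
    (hpos : 0 < ⟪ai - aj, u⟫)
    (x : EuclideanSpace ℝ (Fin d))
    (hx_u : ρ / 2 ≤ ⟪x - p, u⟫)
    (hx_V : ‖(x - p) - ⟪x - p, u⟫ • u‖ ≤ ε⁻¹ * (⟪x - p, u⟫ - ρ / 2)) :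
    (ρ / 2 - 3 * Δ) * |⟪ai - aj, u⟫| ≤
      ⟪(x - p) - ((2 : ℝ)⁻¹ • (ai + aj) - p), ai - aj⟫ ∧
    0 < ⟪(x - p) - ((2 : ℝ)⁻¹ • (ai + aj) - p), ai - aj⟫ ∧
    ‖x - ai‖ < ‖x - aj‖ :=
  assign_correct_general ρ Δ ε hε0 hΔ hρ u p ai aj hu h1 h2 h3 hpos x hx_V
end

section
/- In the robust setting, the extended nice region Ñ_{i,j} = {x in the cone of C_i toward C_j : ⟨x−μ_i,u⟩ ≤ αΔ} has diameter at most (α+1)·2Δ/ε, and by averaging |Ñ_{i,j} ∩ C_i| ≥ (α/(α+1))·|C_i|. -/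
/-!
Write `w = x - μᵢ`. The cone condition bounds the component of `w` orthogonal to `u` by
`ε⁻¹ (⟪w, u⟫ + Δ) ≤ (α + 1)Δ/ε`, and `|⟪w, u⟫| ≤ αΔ`, so every point of the region lies within
`(α + 1)Δ/ε + αΔ` of `μᵢ`. For the count, `⟪x - μᵢ, u⟫` sums to zero over `Cᵢ` and is at least `-Δ`
everywhere; points outside the region contribute more than `αΔ` each, so they are at most a
`1/(α + 1)` fraction.
-/

open RealInnerProductSpace Finset Classical

theorem sum_sub_inv_card_smul_sum {ι E : Type*} [AddCommGroup E] [Module ℝ E]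
    (s : Finset ι) (f : ι → E) :
    ∑ i ∈ s, (f i - (#s : ℝ)⁻¹ • ∑ j ∈ s, f j) = 0 := by
  rcases s.eq_empty_or_nonempty with rfl | hs
  · simp
  rw [sum_sub_distrib, sum_const, ← Nat.cast_smul_eq_nsmul ℝ, smul_smul,
    mul_inv_cancel₀ (by exact_mod_cast hs.card_ne_zero), one_smul, sub_self]

theorem mul_card_le_mul_card_filter_of_sum_eq_zero {ι : Type*} (s : Finset ι) (f : ι → ℝ)
    {a b : ℝ} (hsum : ∑ i ∈ s, f i = 0) (hlow : ∀ i ∈ s, -a ≤ f i) :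
    b * #s ≤ (a + b) * #(s.filter (f · ≤ b)) := by
  have hcard := card_filter_add_card_filter_not (s := s) (fun i => f i ≤ b)
  have hsmall : #(s.filter (f · ≤ b)) • (-a) ≤ ∑ i ∈ s.filter (f · ≤ b), f i :=
    card_nsmul_le_sum _ _ _ fun i hi => hlow i (mem_filter.1 hi).1
  have hlarge : #(s.filter (¬ f · ≤ b)) • b ≤ ∑ i ∈ s.filter (¬ f · ≤ b), f i :=
    card_nsmul_le_sum _ _ _ fun i hi => (not_le.1 (mem_filter.1 hi).2).le
  have hsplit := sum_filter_add_sum_filter_not s (f · ≤ b) f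
  rw [hsum] at hsplit
  rw [nsmul_eq_mul] at hsmall hlarge
  rw [← hcard]
  push_cast
  linarith

section

variable {E : Type*} [NormedAddCommGroup E] [InnerProductSpace ℝ E] {u : E}

theorem sub_inner_smul_add_smul_self (hu : ‖u‖ = 1) (w : E) (c : ℝ) :
    (w + c • u) - ⟪w + c • u, u⟫ • u = w - ⟪w, u⟫ • u := by
  rw [inner_add_left, real_inner_smul_left, real_inner_self_eq_norm_sq, hu]
  module

theorem norm_le_norm_sub_inner_smul_add_abs_inner (hu : ‖u‖ = 1) (w : E) :
    ‖w‖ ≤ ‖w - ⟪w, u⟫ • u‖ + |⟪w, u⟫| := by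
  calc ‖w‖ = ‖(w - ⟪w, u⟫ • u) + ⟪w, u⟫ • u‖ := by rw [sub_add_cancel]
    _ ≤ ‖w - ⟪w, u⟫ • u‖ + ‖⟪w, u⟫ • u‖ := norm_add_le _ _
    _ = ‖w - ⟪w, u⟫ • u‖ + |⟪w, u⟫| := by rw [norm_smul, hu, mul_one, Real.norm_eq_abs]

theorem norm_sub_le_of_cone_of_inner_le (hu : ‖u‖ = 1) {μ x : E} {α Δ ε : ℝ} (hα : 1 ≤ α)
    (hε : 0 ≤ ε)
    (hcone : ‖(x - (μ - Δ • u)) - ⟪x - (μ - Δ • u), u⟫ • u‖ ≤ ε⁻¹ * ⟪x - (μ - Δ • u), u⟫)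
    (hlow : -Δ ≤ ⟪x - μ, u⟫) (hup : ⟪x - μ, u⟫ ≤ α * Δ) :
    ‖x - μ‖ ≤ (α + 1) * Δ / ε + α * Δ := by
  have hapex : x - (μ - Δ • u) = (x - μ) + Δ • u := by abel
  rw [hapex, sub_inner_smul_add_smul_self hu, inner_add_left, real_inner_smul_left,
    real_inner_self_eq_norm_sq, hu, one_pow, mul_one] at hcone
  have hperp : ‖(x - μ) - ⟪x - μ, u⟫ • u‖ ≤ (α + 1) * Δ / ε := by
    rw [div_eq_inv_mul]
    exact hcone.trans (mul_le_mul_of_nonneg_left (by linarith) (inv_nonneg.2 hε))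
  have habs : |⟪x - μ, u⟫| ≤ α * Δ := abs_le.2 ⟨by nlinarith, hup⟩
  linarith [norm_le_norm_sub_inner_smul_add_abs_inner hu (x - μ)]

end

theorem extended_nice_region_properties_general {d : ℕ} (α Δ ε : ℝ)
    (hα : 1 ≤ α) (hΔ : 0 < Δ) (hε0 : 0 < ε)
    (u : EuclideanSpace ℝ (Fin d)) (hu : ‖u‖ = 1)
    (Ci : Finset (EuclideanSpace ℝ (Fin d)))
    (μi : EuclideanSpace ℝ (Fin d)) (hμi : μi = ((Ci.card : ℝ))⁻¹ • ∑ x ∈ Ci, x)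
    (cone : EuclideanSpace ℝ (Fin d) → Prop)
    (hcone_def : ∀ x, cone x ↔
      (‖(x - (μi - Δ • u)) - ⟪x - (μi - Δ • u), u⟫ • u‖ ≤
          ε⁻¹ * ⟪x - (μi - Δ • u), u⟫ ∧ -Δ ≤ ⟪x - μi, u⟫))
    (hCi_cone : ∀ x ∈ Ci, cone x) :
    (∀ x y : EuclideanSpace ℝ (Fin d),
      cone x → ⟪x - μi, u⟫ ≤ α * Δ → cone y → ⟪y - μi, u⟫ ≤ α * Δ →
      ‖x - y‖ ≤ 2 * (α + 1) * Δ / ε + 2 * α * Δ) ∧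
    (α / (α + 1)) * Ci.card ≤
      ((Ci.filter (fun x => cone x ∧ ⟪x - μi, u⟫ ≤ α * Δ)).card : ℝ) := by
  refine ⟨fun x y hx hxα hy hyα => ?_, ?_⟩
  · obtain ⟨hxc, hxl⟩ := (hcone_def x).1 hx
    obtain ⟨hyc, hyl⟩ := (hcone_def y).1 hy
    calc ‖x - y‖ ≤ ‖x - μi‖ + ‖y - μi‖ := by
          simpa only [dist_eq_norm] using dist_triangle_right x y μi
      _ ≤ ((α + 1) * Δ / ε + α * Δ) + ((α + 1) * Δ / ε + α * Δ) :=
        add_le_add (norm_sub_le_of_cone_of_inner_le hu hα hε0.le hxc hxl hxα)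
          (norm_sub_le_of_cone_of_inner_le hu hα hε0.le hyc hyl hyα)
      _ = 2 * (α + 1) * Δ / ε + 2 * α * Δ := by ring
  · have hsum : ∑ x ∈ Ci, ⟪x - μi, u⟫ = 0 := by
      rw [← sum_inner, hμi, sum_sub_inv_card_smul_sum Ci fun x => x, inner_zero_left]
    have hcount := mul_card_le_mul_card_filter_of_sum_eq_zero Ci (⟪· - μi, u⟫) (b := α * Δ)
      hsum fun x hx => ((hcone_def x).1 (hCi_cone x hx)).2
    rw [filter_congr fun x hx => and_iff_right (hCi_cone x hx), div_mul_eq_mul_div,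
      div_le_iff₀ (by linarith)]
    exact le_of_mul_le_mul_right (by linarith) hΔ

/-- The extended nice region `Ñ_{i,j} = {x in the cone of C_i toward C_j : ⟨x−μ_i,u⟩ ≤ αΔ}`
has diameter at most `2(α+1)Δ/ε + 2αΔ`, and contains at least an `α/(α+1)` fraction of
the points of `C_i`. -/
theorem extended_nice_region_properties {d : ℕ} (α Δ ε : ℝ)
    (hα : 1 ≤ α) (hΔ : 0 < Δ) (hε0 : 0 < ε) (hε1 : ε ≤ 1)
    (u : EuclideanSpace ℝ (Fin d)) (hu : ‖u‖ = 1)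
    (Ci : Finset (EuclideanSpace ℝ (Fin d))) (hCi : Ci.Nonempty)
    (μi : EuclideanSpace ℝ (Fin d)) (hμi : μi = ((Ci.card : ℝ))⁻¹ • ∑ x ∈ Ci, x)
    (cone : EuclideanSpace ℝ (Fin d) → Prop)
    (hcone_def : ∀ x, cone x ↔
      (‖(x - (μi - Δ • u)) - ⟪x - (μi - Δ • u), u⟫ • u‖ ≤
          ε⁻¹ * ⟪x - (μi - Δ • u), u⟫ ∧ -Δ ≤ ⟪x - μi, u⟫))
    (hCi_cone : ∀ x ∈ Ci, cone x) :
    (∀ x y : EuclideanSpace ℝ (Fin d),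
      cone x → ⟪x - μi, u⟫ ≤ α * Δ → cone y → ⟪y - μi, u⟫ ≤ α * Δ →
      ‖x - y‖ ≤ 2 * (α + 1) * Δ / ε + 2 * α * Δ) ∧
    (α / (α + 1)) * Ci.card ≤
      ((Ci.filter (fun x => cone x ∧ ⟪x - μi, u⟫ ≤ α * Δ)).card : ℝ) :=
  extended_nice_region_properties_general α Δ ε hα hΔ hε0 u hu Ci μi hμi cone hcone_def hCi_cone
end

section
/- Robust bisector properties: if ρ ≥ 2r + (2/ε)((α+1)Δ/ε + r), then for a_i within distance r of the extended nice region of C_i toward C_j and a_j within distance r of the extended nice region of C_j toward C_i: (1) ‖(a_i−a_j)_{(u)}‖ ≥ ‖(a_i−a_j)_{(V)}‖/ε; (2) ⟨(a_i+a_j)/2 − p, u⟩ ≤ (α+1)Δ/2 + r; (3) ‖((a_i+a_j)/2 − p)_{(V)}‖ ≤ (α+1)Δ/ε + r. -/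
open RealInnerProductSpace

section Rejection

variable {E : Type*} [NormedAddCommGroup E] [InnerProductSpace ℝ E]

/-- The paper's `x_{(V)}`: the component of `x` orthogonal to `u` when `‖u‖ = 1`. -/
def orthRejection (u : E) : E →ₗ[ℝ] E where
  toFun x := x - ⟪x, u⟫ • u
  map_add' x y := by
    rw [inner_add_left]
    module
  map_smul' c x := by
    rw [real_inner_smul_left]
    simp only [RingHom.id_apply]
    module

theorem orthRejection_apply (u x : E) : orthRejection u x = x - ⟪x, u⟫ • u := rfl

theorem inner_midpoint_sub (u a b p : E) :
    ⟪(2 : ℝ)⁻¹ • (a + b) - p, u⟫ = (⟪a - p, u⟫ + ⟪b - p, u⟫) / 2 := by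
  rw [show (2 : ℝ)⁻¹ • (a + b) - p = (2 : ℝ)⁻¹ • ((a - p) + (b - p)) by module,
    real_inner_smul_left, inner_add_left]
  ring

end Rejection

theorem norm_map_midpoint_sub_le {E F : Type*} [NormedAddCommGroup E] [NormedSpace ℝ E]
    [SeminormedAddCommGroup F] [NormedSpace ℝ F] (f : E →ₗ[ℝ] F) (a b p : E) :
    ‖f ((2 : ℝ)⁻¹ • (a + b) - p)‖ ≤ (‖f (a - p)‖ + ‖f (b - p)‖) / 2 := by
  rw [show (2 : ℝ)⁻¹ • (a + b) - p = (2 : ℝ)⁻¹ • ((a - p) + (b - p)) by module,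
    map_smul, map_add, norm_smul, Real.norm_of_nonneg (by norm_num), inv_mul_eq_div]
  gcongr
  exact norm_add_le _ _

theorem robust_bisector_properties_general {d : ℕ} (ρ Δ ε α r Dij : ℝ)
    (hε0 : 0 < ε)
    (hρ : 2 * r + (2 / ε) * ((α + 1) * Δ / ε + r) ≤ ρ)
    (u p ai aj : EuclideanSpace ℝ (Fin d))
    (hgap : ρ - 2 * r ≤ ⟪ai - aj, u⟫)
    (hV : ‖(ai - aj) - ⟪ai - aj, u⟫ • u‖ ≤ 2 * ((α + 1) * Δ / ε + r))
    (hai_u : ⟪ai - p, u⟫ ≤ Dij / 2 + α * Δ + r)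
    (haj_u : ⟪aj - p, u⟫ ≤ -(Dij / 2) + Δ + r)
    (hai_V : ‖(ai - p) - ⟪ai - p, u⟫ • u‖ ≤ (α + 1) * Δ / ε + r)
    (haj_V : ‖(aj - p) - ⟪aj - p, u⟫ • u‖ ≤ (α + 1) * Δ / ε + r) :
    ‖(ai - aj) - ⟪ai - aj, u⟫ • u‖ / ε ≤ |⟪ai - aj, u⟫| ∧
    ⟪(2 : ℝ)⁻¹ • (ai + aj) - p, u⟫ ≤ (α + 1) * Δ / 2 + r ∧
    ‖((2 : ℝ)⁻¹ • (ai + aj) - p) - ⟪(2 : ℝ)⁻¹ • (ai + aj) - p, u⟫ • u‖ ≤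
      (α + 1) * Δ / ε + r := by
  refine ⟨?_, ?_, ?_⟩
  · calc ‖(ai - aj) - ⟪ai - aj, u⟫ • u‖ / ε
        ≤ 2 * ((α + 1) * Δ / ε + r) / ε := by gcongr
      _ = (2 / ε) * ((α + 1) * Δ / ε + r) := by ring
      _ ≤ ρ - 2 * r := by linarith
      _ ≤ ⟪ai - aj, u⟫ := hgap
      _ ≤ |⟪ai - aj, u⟫| := le_abs_self _
  · rw [inner_midpoint_sub]
    linarith
  · have hmid := norm_map_midpoint_sub_le (orthRejection u) ai aj p
    simp only [orthRejection_apply] at hmid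
    linarith

/-- Robust bisector properties: if `ρ ≥ 2r + (2/ε)((α+1)Δ/ε + r)`, then for `a_i`
within distance `r` of the extended nice region of `C_i` toward `C_j` and `a_j`
within distance `r` of that of `C_j` toward `C_i` (so that the listed projection
bounds hold): (1) `‖(a_i−a_j)_{(u)}‖ ≥ ‖(a_i−a_j)_{(V)}‖/ε`;
(2) `⟨(a_i+a_j)/2 − p, u⟩ ≤ (α+1)Δ/2 + r`;
(3) `‖((a_i+a_j)/2 − p)_{(V)}‖ ≤ (α+1)Δ/ε + r`. -/
theorem robust_bisector_properties {d : ℕ} (ρ Δ ε α r Dij : ℝ)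
    (hε0 : 0 < ε) (hε1 : ε ≤ 1) (hΔ : 0 < Δ) (hα : 1 ≤ α) (hr : 0 < r)
    (hρ : 2 * r + (2 / ε) * ((α + 1) * Δ / ε + r) ≤ ρ)
    (hDij : ρ + 2 * Δ ≤ Dij)
    (u p ai aj : EuclideanSpace ℝ (Fin d)) (hu : ‖u‖ = 1)
    (hgap : ρ - 2 * r ≤ ⟪ai - aj, u⟫)
    (hV : ‖(ai - aj) - ⟪ai - aj, u⟫ • u‖ ≤ 2 * ((α + 1) * Δ / ε + r))
    (hai_u : ⟪ai - p, u⟫ ≤ Dij / 2 + α * Δ + r)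
    (haj_u : ⟪aj - p, u⟫ ≤ -(Dij / 2) + Δ + r)
    (hai_V : ‖(ai - p) - ⟪ai - p, u⟫ • u‖ ≤ (α + 1) * Δ / ε + r)
    (haj_V : ‖(aj - p) - ⟪aj - p, u⟫ • u‖ ≤ (α + 1) * Δ / ε + r) :
    ‖(ai - aj) - ⟪ai - aj, u⟫ • u‖ / ε ≤ |⟪ai - aj, u⟫| ∧
    ⟪(2 : ℝ)⁻¹ • (ai + aj) - p, u⟫ ≤ (α + 1) * Δ / 2 + r ∧
    ‖((2 : ℝ)⁻¹ • (ai + aj) - p) - ⟪(2 : ℝ)⁻¹ • (ai + aj) - p, u⟫ • u‖ ≤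
      (α + 1) * Δ / ε + r :=
  robust_bisector_properties_general ρ Δ ε α r Dij hε0 hρ u p ai aj hgap hV hai_u haj_u hai_V haj_V
end

section
/- Robust assignment correctness: under the robust bisector properties (1)-(3) with parameters α, Δ, ε, r, and for ρ/2 ≥ (3/2)(α+1)Δ + (1+ε)r, every point x with ⟨x−p,u⟩ ≥ ρ/2 and ‖(x−p)_{(V)}‖ ≤ (1/ε)(⟨x−p,u⟩ − ρ/2) satisfies ⟨(x−p) − ((a_i+a_j)/2 − p), a_i−a_j⟩ ≥ (ρ/2 − (3/2)(α+1)Δ − (1+ε)r)·‖(a_i−a_j)_{(u)}‖ ≥ 0, i.e., x is closer to a_i than to a_j. -/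
open RealInnerProductSpace

/-!
Split every vector into its component along `u` and its part orthogonal to `u`. Then
`⟪z, w⟫ ≥ ⟪z, u⟫⟪w, u⟫ - ‖z_V‖ ‖w_V‖` with `z = (x - p) - ((a_i + a_j)/2 - p)` and `w = a_i - a_j`.
The cone conditions on `x` and on the midpoint bound `‖z_V‖` by `ε⁻¹` times an affine expression in
`⟪x - p, u⟫`, and `‖w_V‖ ≤ ε ⟪w, u⟫`, so the factors `ε` cancel and the dependence on `⟪x - p, u⟫`
drops out, leaving the claimed multiple of `⟪w, u⟫`.
-/

section

variable {E : Type*} [NormedAddCommGroup E] [InnerProductSpace ℝ E]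

lemma sub_inner_smul_sub (u a b : E) :
    (a - b) - ⟪a - b, u⟫ • u = (a - ⟪a, u⟫ • u) - (b - ⟪b, u⟫ • u) := by
  rw [inner_sub_left, sub_smul]
  abel

lemma inner_eq_inner_orthogonal_add_mul {u : E} (hu : ‖u‖ = 1) (a b : E) :
    ⟪a, b⟫ = ⟪a - ⟪a, u⟫ • u, b - ⟪b, u⟫ • u⟫ + ⟪a, u⟫ * ⟪b, u⟫ := by
  have huu : ⟪u, u⟫ = 1 := by rw [real_inner_self_eq_norm_sq, hu, one_pow]
  simp only [inner_sub_left, inner_sub_right, real_inner_smul_left, real_inner_smul_right, huu,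
    real_inner_comm u b]
  ring

lemma mul_inner_sub_le_inner {u z w : E} {ε K : ℝ} (hu : ‖u‖ = 1) (hε : 0 < ε)
    (hz_V : ‖z - ⟪z, u⟫ • u‖ ≤ ε⁻¹ * K) (hw_V : ‖w - ⟪w, u⟫ • u‖ ≤ ε * ⟪w, u⟫) :
    (⟪z, u⟫ - K) * ⟪w, u⟫ ≤ ⟪z, w⟫ := by
  have hprod : ‖z - ⟪z, u⟫ • u‖ * ‖w - ⟪w, u⟫ • u‖ ≤ K * ⟪w, u⟫ :=
    calc ‖z - ⟪z, u⟫ • u‖ * ‖w - ⟪w, u⟫ • u‖ ≤ (ε⁻¹ * K) * (ε * ⟪w, u⟫) :=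
          mul_le_mul hz_V hw_V (norm_nonneg _) ((norm_nonneg _).trans hz_V)
      _ = K * ⟪w, u⟫ := by field_simp
  have hCS := neg_le_of_abs_le (abs_real_inner_le_norm (z - ⟪z, u⟫ • u) (w - ⟪w, u⟫ • u))
  rw [inner_eq_inner_orthogonal_add_mul hu z w]
  linarith

lemma norm_sub_le_norm_sub_iff_inner_nonneg (x a b : E) :
    ‖x - a‖ ≤ ‖x - b‖ ↔ 0 ≤ ⟪x - (2 : ℝ)⁻¹ • (a + b), a - b⟫ := by
  have hsq : ‖x - b‖ ^ 2 - ‖x - a‖ ^ 2 = 2 * ⟪x - (2 : ℝ)⁻¹ • (a + b), a - b⟫ := by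
    rw [← real_inner_self_eq_norm_sq, ← real_inner_self_eq_norm_sq]
    simp only [inner_sub_left, inner_sub_right, inner_add_left, real_inner_smul_left,
      real_inner_comm a b, real_inner_comm a x, real_inner_comm b x]
    ring
  rw [← sq_le_sq₀ (norm_nonneg _) (norm_nonneg _)]
  constructor <;> intro h <;> linarith

end

theorem robust_assign_correct_general {d : ℕ} (ρ Δ ε α r : ℝ)
    (hε0 : 0 < ε)
    (hρ : (3 / 2) * (α + 1) * Δ + (1 + ε) * r ≤ ρ / 2)
    (u p ai aj : EuclideanSpace ℝ (Fin d)) (hu : ‖u‖ = 1)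
    (hpos : 0 < ⟪ai - aj, u⟫)
    (h1 : ‖(ai - aj) - ⟪ai - aj, u⟫ • u‖ / ε ≤ |⟪ai - aj, u⟫|)
    (h2 : ⟪(2 : ℝ)⁻¹ • (ai + aj) - p, u⟫ ≤ (α + 1) * Δ / 2 + r)
    (h3 : ‖((2 : ℝ)⁻¹ • (ai + aj) - p) - ⟪(2 : ℝ)⁻¹ • (ai + aj) - p, u⟫ • u‖ ≤
      (α + 1) * Δ / ε + r)
    (x : EuclideanSpace ℝ (Fin d))
    (hx_V : ‖(x - p) - ⟪x - p, u⟫ • u‖ ≤ ε⁻¹ * (⟪x - p, u⟫ - ρ / 2)) :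
    (ρ / 2 - (3 / 2) * (α + 1) * Δ - (1 + ε) * r) * |⟪ai - aj, u⟫| ≤
      ⟪(x - p) - ((2 : ℝ)⁻¹ • (ai + aj) - p), ai - aj⟫ ∧
    0 ≤ ⟪(x - p) - ((2 : ℝ)⁻¹ • (ai + aj) - p), ai - aj⟫ ∧
    ‖x - ai‖ ≤ ‖x - aj‖ := by
  set m := (2 : ℝ)⁻¹ • (ai + aj) - p
  rw [abs_of_pos hpos] at h1 ⊢
  have hw_V : ‖(ai - aj) - ⟪ai - aj, u⟫ • u‖ ≤ ε * ⟪ai - aj, u⟫ := by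
    rw [div_le_iff₀ hε0] at h1
    linarith
  have hz_V : ‖(x - p - m) - ⟪x - p - m, u⟫ • u‖ ≤
      ε⁻¹ * (⟪x - p, u⟫ - ρ / 2 + (α + 1) * Δ + ε * r) :=
    calc ‖(x - p - m) - ⟪x - p - m, u⟫ • u‖
        ≤ ‖(x - p) - ⟪x - p, u⟫ • u‖ + ‖m - ⟪m, u⟫ • u‖ := by
          rw [sub_inner_smul_sub]; exact norm_sub_le _ _
      _ ≤ ε⁻¹ * (⟪x - p, u⟫ - ρ / 2) + ((α + 1) * Δ / ε + r) := add_le_add hx_V h3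
      _ = ε⁻¹ * (⟪x - p, u⟫ - ρ / 2 + (α + 1) * Δ + ε * r) := by field_simp; ring
  have hcone := mul_inner_sub_le_inner hu hε0 hz_V hw_V
  rw [inner_sub_left] at hcone
  have hbound : (ρ / 2 - (3 / 2) * (α + 1) * Δ - (1 + ε) * r) * ⟪ai - aj, u⟫ ≤
      ⟪x - p - m, ai - aj⟫ := by
    nlinarith [mul_le_mul_of_nonneg_right h2 hpos.le]
  have hnonneg : 0 ≤ ⟪x - p - m, ai - aj⟫ :=
    (mul_nonneg (by linarith) hpos.le).trans hbound
  refine ⟨hbound, hnonneg, ?_⟩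
  rwa [norm_sub_le_norm_sub_iff_inner_nonneg, ← sub_sub_sub_cancel_right x _ p]

/-- Robust assignment correctness: under the robust bisector properties and
`ρ/2 ≥ (3/2)(α+1)Δ + (1+ε)r`, every point `x` with `⟨x−p,u⟩ ≥ ρ/2` and
`‖(x−p)_{(V)}‖ ≤ (1/ε)(⟨x−p,u⟩ − ρ/2)` satisfies
`⟨(x−p) − ((a_i+a_j)/2 − p), a_i−a_j⟩ ≥ (ρ/2 − (3/2)(α+1)Δ − (1+ε)r)·‖(a_i−a_j)_{(u)}‖ ≥ 0`,
i.e. `x` is closer to `a_i` than to `a_j`. -/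
theorem robust_assign_correct {d : ℕ} (ρ Δ ε α r : ℝ)
    (hε0 : 0 < ε) (hε1 : ε ≤ 1) (hΔ : 0 < Δ) (hα : 1 ≤ α) (hr : 0 < r) (hρ0 : 0 < ρ)
    (hρ : (3 / 2) * (α + 1) * Δ + (1 + ε) * r ≤ ρ / 2)
    (u p ai aj : EuclideanSpace ℝ (Fin d)) (hu : ‖u‖ = 1)
    (hpos : 0 < ⟪ai - aj, u⟫)
    (h1 : ‖(ai - aj) - ⟪ai - aj, u⟫ • u‖ / ε ≤ |⟪ai - aj, u⟫|)
    (h2 : ⟪(2 : ℝ)⁻¹ • (ai + aj) - p, u⟫ ≤ (α + 1) * Δ / 2 + r)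
    (h3 : ‖((2 : ℝ)⁻¹ • (ai + aj) - p) - ⟪(2 : ℝ)⁻¹ • (ai + aj) - p, u⟫ • u‖ ≤
      (α + 1) * Δ / ε + r)
    (x : EuclideanSpace ℝ (Fin d))
    (hx_u : ρ / 2 ≤ ⟪x - p, u⟫)
    (hx_V : ‖(x - p) - ⟪x - p, u⟫ • u‖ ≤ ε⁻¹ * (⟪x - p, u⟫ - ρ / 2)) :
    (ρ / 2 - (3 / 2) * (α + 1) * Δ - (1 + ε) * r) * |⟪ai - aj, u⟫| ≤
      ⟪(x - p) - ((2 : ℝ)⁻¹ • (ai + aj) - p), ai - aj⟫ ∧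
    0 ≤ ⟪(x - p) - ((2 : ℝ)⁻¹ • (ai + aj) - p), ai - aj⟫ ∧
    ‖x - ai‖ ≤ ‖x - aj‖ :=
  robust_assign_correct_general ρ Δ ε α r hε0 hρ u p ai aj hu hpos h1 h2 h3 x hx_V
end
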